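/- arXiv:1102.1419 — 4 statements merged into one kernel-verified Lean document; each statement's English description precedes it below -/
import Mathlib

section
/- Let (X,p) be a TVS-cone metric space over a locally convex space E whose topology is generated by a family S of monotone seminorms (so the cone P is normal). For every sequence (x_n) in X: (x_n) is cone-Cauchy if and only if p(x_n, x_m) → 0 in the topology of E as m, n → ∞ (i.e., the double-indexed net (p(x_n,x_m)) tends to 0 along the product filter atTop × atTop). -/
open Filter Topology

section Defs

variable {E : Type*} [AddCommGroup E] [Module ℝ E] [TopologicalSpace E]

/-- `P` is a closed, pointed convex cone with nonempty interior in the TVS `E`. -/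
structure IsTVSCone (P : Set E) : Prop where
  add_mem : ∀ ⦃a⦄, a ∈ P → ∀ ⦃b⦄, b ∈ P → a + b ∈ P
  smul_mem : ∀ (r : ℝ), 0 ≤ r → ∀ ⦃a⦄, a ∈ P → r • a ∈ P
  pointed : ∀ a, a ∈ P → -a ∈ P → a = 0
  isClosed : IsClosed P
  int_nonempty : (interior P).Nonempty

/-- `a ≤ b` with respect to the cone `P`. -/
def ConeLe (P : Set E) (a b : E) : Prop := b - a ∈ P

/-- `a ≪ b` with respect to the cone `P`. -/
def ConeLt (P : Set E) (a b : E) : Prop := b - a ∈ interior P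

/-- `p : X × X → E` is a TVS-cone metric over the cone `P`. -/
structure IsConeMetric (P : Set E) {X : Type*} (p : X → X → E) : Prop where
  nonneg : ∀ x y, ConeLe P 0 (p x y)
  eq_zero_iff : ∀ x y, p x y = 0 ↔ x = y
  symm : ∀ x y, p x y = p y x
  triangle : ∀ x y z, ConeLe P (p x y) (p x z + p z y)

/-- The sequence `x` cone-converges to `a`. -/
def ConeConverges (P : Set E) {X : Type*} (p : X → X → E) (x : ℕ → X) (a : X) : Prop :=
  ∀ c, c ∈ interior P → ∃ N, ∀ n ≥ N, ConeLt P (p (x n) a) c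

/-- The sequence `x` is cone-Cauchy. -/
def ConeCauchy (P : Set E) {X : Type*} (p : X → X → E) (x : ℕ → X) : Prop :=
  ∀ c, c ∈ interior P → ∃ N, ∀ n ≥ N, ∀ m ≥ N, ConeLt P (p (x n) (x m)) c

/-- `(X, p)` is cone-complete. -/
def ConeComplete (P : Set E) {X : Type*} (p : X → X → E) : Prop :=
  ∀ x : ℕ → X, ConeCauchy P p x → ∃ a, ConeConverges P p x a

/-- The nonlinear scalarization ξ_e(y) = inf {t : t • e - y ∈ P}. -/
noncomputable def xiScal (P : Set E) (e y : E) : ℝ := sInf {t : ℝ | t • e - y ∈ P}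

/-- The open ball `B(x, c) = {y : p x y ≪ c}`. -/
def coneBall (P : Set E) {X : Type*} (p : X → X → E) (x : X) (c : E) : Set X :=
  {y | ConeLt P (p x y) c}

/-- The cone metric topology `τ_p`, generated by the balls `B(x,c)`, `c ≫ 0`. -/
def coneTopology (P : Set E) {X : Type*} (p : X → X → E) : TopologicalSpace X :=
  TopologicalSpace.generateFrom {s | ∃ x c, c ∈ interior P ∧ s = coneBall P p x c}

end Defs

/-! Normality turns `p(x_n, x_m) ≪ c` into `q (p(x_n, x_m)) ≤ q c` for every seminorm `q`, and
`int P` contains the vectors `t • e` (`e ≫ 0`, `t > 0`) of arbitrarily small seminorm; this gives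
convergence to `0`. Conversely, `{y | y ≪ c}` is a neighbourhood of `0` for each `c ≫ 0`. -/

section ConeOrder

variable {E : Type*} [AddCommGroup E] [TopologicalSpace E] {P : Set E}

open scoped Pointwise in
lemma IsTVSCone.smul_mem_interior [Module ℝ E] [ContinuousConstSMul ℝ E] (hP : IsTVSCone P)
    {t : ℝ} (ht : 0 < t) {e : E} (he : e ∈ interior P) : t • e ∈ interior P := by
  have hsub : t • interior P ⊆ interior P := by
    rw [← interior_smul₀ ht.ne']
    exact interior_mono (Set.smul_set_subset_iff.2 fun a ha => hP.smul_mem t ht.le ha)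
  exact hsub (Set.smul_mem_smul_set he)

lemma IsTVSCone.exists_mem_interior_seminorm_lt [Module ℝ E] [ContinuousConstSMul ℝ E]
    (hP : IsTVSCone P) (q : Seminorm ℝ E) {ε : ℝ} (hε : 0 < ε) : ∃ c ∈ interior P, q c < ε := by
  obtain ⟨e, he⟩ := hP.int_nonempty
  obtain ⟨t, ht, hte⟩ := exists_pos_mul_lt hε (q e)
  refine ⟨t • e, hP.smul_mem_interior ht he, ?_⟩
  rwa [map_smul_eq_mul, Real.norm_of_nonneg ht.le, mul_comm]

lemma tendsto_nhds_zero_of_eventually_coneLt [Module ℝ E] [ContinuousConstSMul ℝ E]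
    {ι α : Type*} {S : ι → Seminorm ℝ E} (hS : WithSeminorms S) (hP : IsTVSCone P)
    (hmono : ∀ i a b, a ∈ P → ConeLe P a b → S i a ≤ S i b) {l : Filter α} {f : α → E}
    (hf : ∀ a, f a ∈ P) (h : ∀ c ∈ interior P, ∀ᶠ a in l, ConeLt P (f a) c) :
    Tendsto f l (𝓝 0) := by
  refine hS.tendsto_nhds f 0 |>.2 fun i ε hε => ?_
  obtain ⟨c, hc, hcε⟩ := hP.exists_mem_interior_seminorm_lt (S i) hε
  filter_upwards [h c hc] with a ha
  rw [sub_zero]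
  exact (hmono i _ _ (hf a) (interior_subset ha)).trans_lt hcε

lemma Filter.Tendsto.eventually_coneLt [ContinuousSub E] {α : Type*} {l : Filter α}
    {f : α → E} (h : Tendsto f l (𝓝 0)) {c : E} (hc : c ∈ interior P) :
    ∀ᶠ a in l, ConeLt P (f a) c :=
  h.eventually <| ((continuous_const.sub continuous_id).tendsto' 0 c (sub_zero c)).eventually
    (isOpen_interior.mem_nhds hc)

lemma coneCauchy_iff_eventually_coneLt {X : Type*} {p : X → X → E} {x : ℕ → X} :
    ConeCauchy P p x ↔
      ∀ c ∈ interior P, ∀ᶠ nm in atTop ×ˢ atTop, ConeLt P (p (x nm.1) (x nm.2)) c := by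
  simp only [ConeCauchy, prod_atTop_atTop_eq, eventually_atTop_prod_self']

end ConeOrder

theorem stmt_2_general {E X : Type*} [AddCommGroup E] [Module ℝ E] [TopologicalSpace E]
    [IsTopologicalAddGroup E] [ContinuousSMul ℝ E]
    {ι : Type*} (S : ι → Seminorm ℝ E) (hS : WithSeminorms S)
    (P : Set E) (hP : IsTVSCone P)
    (hmono : ∀ i : ι, ∀ a b : E, a ∈ P → ConeLe P a b → S i a ≤ S i b)
    (p : X → X → E) (hp : IsConeMetric P p) (x : ℕ → X) :
    ConeCauchy P p x ↔
      Tendsto (fun nm : ℕ × ℕ => p (x nm.1) (x nm.2)) (atTop ×ˢ atTop) (nhds 0) := by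
  rw [coneCauchy_iff_eventually_coneLt]
  refine ⟨tendsto_nhds_zero_of_eventually_coneLt hS hP hmono fun nm => ?_,
    fun h c hc => h.eventually_coneLt hc⟩
  simpa only [ConeLe, sub_zero] using hp.nonneg (x nm.1) (x nm.2)

/-- over a normal cone in a locally convex space, `x` is cone-Cauchy iff
`p (x_n) (x_m) → 0` in `E` along the product filter `atTop ×ˢ atTop`. -/
theorem stmt_2 {E X : Type*} [AddCommGroup E] [Module ℝ E] [TopologicalSpace E]
    [IsTopologicalAddGroup E] [ContinuousSMul ℝ E] [T2Space E] [Nonempty X]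
    {ι : Type*} [Nonempty ι] (S : ι → Seminorm ℝ E) (hS : WithSeminorms S)
    (P : Set E) (hP : IsTVSCone P)
    (hmono : ∀ i : ι, ∀ a b : E, a ∈ P → ConeLe P a b → S i a ≤ S i b)
    (p : X → X → E) (hp : IsConeMetric P p) (x : ℕ → X) :
    ConeCauchy P p x ↔
      Tendsto (fun nm : ℕ × ℕ => p (x nm.1) (x nm.2)) (atTop ×ˢ atTop) (nhds 0) :=
  stmt_2_general S hS P hP hmono p hp x
end

section
/- Let (X,p) be a TVS-cone metric space over E with cone P and fix e ∈ int P. Then (X,p) is cone-complete if and only if the metric space (X, d_p) is complete, i.e., every sequence (x_n) that is Cauchy for d_p admits a point x ∈ X with d_p(x_n, x) → 0. -/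
/-!
For `c ≫ 0` openness of `int P` gives `ε > 0` with `c - ε • e ≫ 0`, and then `ξ_e(y) < ε` forces
`y ≪ c`; conversely `y ≪ (ε/2) • e` gives `ξ_e(y) ≤ ε/2`. Hence, along any filter, `y ≪ c`
eventually for every `c ≫ 0` iff `ξ_e(y) < ε` eventually for every `ε > 0`. Applied to `p(x_n, x_m)`
and to `p(x_n, a)` (where `ξ_e ≥ 0` on `P`), this identifies cone-Cauchy with `d_p`-Cauchy sequences
and cone-convergence with `d_p`-convergence.
-/

open Filter Topology

-- Where the set is unbounded below, `sInf` takes the junk value `0`.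
lemma xiScal_le_max {E : Type*} [AddCommGroup E] [Module ℝ E] {P : Set E} {e y : E} {t : ℝ}
    (ht : t • e - y ∈ P) : xiScal P e y ≤ max t 0 := by
  by_cases hbdd : BddBelow {t : ℝ | t • e - y ∈ P}
  · exact (csInf_le hbdd ht).trans (le_max_left t 0)
  · rw [xiScal, Real.sInf_of_not_bddBelow hbdd]
    exact le_max_right t 0

section Scalarization

variable {E : Type*} [AddCommGroup E] [Module ℝ E] [TopologicalSpace E] {P : Set E} {e y : E}

lemma exists_pos_sub_smul_mem [ContinuousSub E] [ContinuousSMul ℝ E] {U : Set E} {c : E}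
    (hU : IsOpen U) (hc : c ∈ U) (v : E) : ∃ ε : ℝ, 0 < ε ∧ c - ε • v ∈ U := by
  have hcont : Continuous fun t : ℝ => c - t • v := by fun_prop
  have hmem : ∀ᶠ t in 𝓝[>] (0 : ℝ), c - t • v ∈ U :=
    nhdsWithin_le_nhds <| hcont.continuousAt.preimage_mem_nhds <| by simpa using hU.mem_nhds hc
  obtain ⟨ε, hεU, hε⟩ := (hmem.and self_mem_nhdsWithin).exists
  exact ⟨ε, hε, hεU⟩

namespace IsTVSCone

lemma add_mem_interior [IsTopologicalAddGroup E] (hP : IsTVSCone P) {a b : E}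
    (ha : a ∈ interior P) (hb : b ∈ P) : a + b ∈ interior P :=
  interior_maximal
    (Set.add_subset_iff.2 fun _ hx _ hy => hP.add_mem (interior_subset hx) hy)
    isOpen_interior.add_right (Set.add_mem_add ha hb)

lemma smul_mem_interior_s7 [ContinuousConstSMul ℝ E] (hP : IsTVSCone P) {r : ℝ} (hr : 0 < r)
    {a : E} (ha : a ∈ interior P) : r • a ∈ interior P :=
  interior_maximal
    (Set.smul_set_subset_iff.2 fun _ hx => hP.smul_mem r hr.le (interior_subset hx))
    (isOpen_interior.smul₀ hr.ne') (Set.smul_mem_smul_set ha)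

lemma xiScal_set_nonempty [ContinuousSub E] [ContinuousSMul ℝ E] (hP : IsTVSCone P)
    (he : e ∈ interior P) (y : E) : {t : ℝ | t • e - y ∈ P}.Nonempty := by
  obtain ⟨s, hs, hmem⟩ := exists_pos_sub_smul_mem isOpen_interior he y
  refine ⟨s⁻¹, ?_⟩
  have := hP.smul_mem s⁻¹ (inv_nonneg.2 hs.le) (interior_subset hmem)
  rwa [smul_sub, smul_smul, inv_mul_cancel₀ hs.ne', one_smul] at this

lemma sub_mem_of_xiScal_lt [ContinuousSub E] [ContinuousSMul ℝ E] (hP : IsTVSCone P)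
    (he : e ∈ interior P) {ε : ℝ} (hy : xiScal P e y < ε) : ε • e - y ∈ P := by
  obtain ⟨t, ht, htε⟩ := exists_lt_of_csInf_lt (hP.xiScal_set_nonempty he y) hy
  have := hP.add_mem (hP.smul_mem (ε - t) (by linarith) (interior_subset he)) ht
  rwa [sub_smul, sub_add_sub_cancel] at this

lemma coneLt_of_xiScal_lt [IsTopologicalAddGroup E] [ContinuousSMul ℝ E] (hP : IsTVSCone P)
    (he : e ∈ interior P) {c : E} {ε : ℝ} (hc : c - ε • e ∈ interior P)
    (hy : xiScal P e y < ε) : ConeLt P y c := by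
  have := hP.add_mem_interior hc (hP.sub_mem_of_xiScal_lt he hy)
  rwa [sub_add_sub_cancel] at this

lemma xiScal_nonneg (hP : IsTVSCone P) (he : e ∈ P) (hy : y ∈ P) : 0 ≤ xiScal P e y := by
  rcases eq_or_ne e 0 with rfl | he0
  · by_cases h : -y ∈ P <;> simp [xiScal, h]
  refine Real.sInf_nonneg fun t ht => ?_
  by_contra! ht0
  have hte : t • e ∈ P := by simpa using hP.add_mem ht hy
  have hne : -e ∈ P := by
    simpa [smul_smul, inv_mul_cancel₀ ht0.ne] using hP.smul_mem (-t)⁻¹ (by simp [ht0.le]) hte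
  exact he0 (hP.pointed e he hne)

lemma forall_eventually_coneLt_iff [IsTopologicalAddGroup E] [ContinuousSMul ℝ E]
    (hP : IsTVSCone P) (he : e ∈ interior P) {ι : Type*} {l : Filter ι} {y : ι → E} :
    (∀ c ∈ interior P, ∀ᶠ i in l, ConeLt P (y i) c) ↔
      ∀ ε : ℝ, 0 < ε → ∀ᶠ i in l, xiScal P e (y i) < ε := by
  constructor
  · intro h ε hε
    filter_upwards [h _ (hP.smul_mem_interior_s7 (half_pos hε) he)] with i hi
    calc xiScal P e (y i) ≤ max (ε / 2) 0 := xiScal_le_max (interior_subset hi)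
      _ < ε := by rw [max_eq_left (half_pos hε).le]; exact half_lt_self hε
  · intro h c hc
    obtain ⟨ε, hε, hεc⟩ := exists_pos_sub_smul_mem isOpen_interior hc e
    filter_upwards [h ε hε] with i hi
    exact hP.coneLt_of_xiScal_lt he hεc hi

end IsTVSCone

end Scalarization

section ConeMetric

variable {E X : Type*} [AddCommGroup E] [Module ℝ E] [TopologicalSpace E]
  [IsTopologicalAddGroup E] [ContinuousSMul ℝ E] {P : Set E} {p : X → X → E} {e : E}

lemma coneCauchy_iff_xiScal (hP : IsTVSCone P) (he : e ∈ interior P) {x : ℕ → X} :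
    ConeCauchy P p x ↔
      ∀ ε : ℝ, 0 < ε → ∃ N, ∀ n ≥ N, ∀ m ≥ N, xiScal P e (p (x n) (x m)) < ε := by
  simpa only [ConeCauchy, eventually_atTop_prod_self'] using
    hP.forall_eventually_coneLt_iff he (l := atTop) (y := fun nm : ℕ × ℕ => p (x nm.1) (x nm.2))

lemma coneConverges_iff_tendsto_xiScal (hP : IsTVSCone P) (hp : IsConeMetric P p)
    (he : e ∈ interior P) {x : ℕ → X} {a : X} :
    ConeConverges P p x a ↔ Tendsto (fun n => xiScal P e (p (x n) a)) atTop (𝓝 0) := by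
  have hnonneg : ∀ n, 0 ≤ xiScal P e (p (x n) a) := fun n =>
    hP.xiScal_nonneg (interior_subset he) (by simpa [ConeLe] using hp.nonneg (x n) a)
  rw [tendsto_order, and_iff_right fun a' ha' => .of_forall fun n => ha'.trans_le (hnonneg n)]
  simpa only [ConeConverges, eventually_atTop, gt_iff_lt] using
    hP.forall_eventually_coneLt_iff he (l := atTop) (y := fun n => p (x n) a)

end ConeMetric

theorem stmt_7_general {E X : Type*} [AddCommGroup E] [Module ℝ E] [TopologicalSpace E]
    [IsTopologicalAddGroup E] [ContinuousSMul ℝ E]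
    (P : Set E) (hP : IsTVSCone P) (p : X → X → E) (hp : IsConeMetric P p)
    (e : E) (he : e ∈ interior P) :
    ConeComplete P p ↔
      ∀ x : ℕ → X,
        (∀ ε : ℝ, 0 < ε → ∃ N, ∀ n ≥ N, ∀ m ≥ N, xiScal P e (p (x n) (x m)) < ε) →
        ∃ a : X, Tendsto (fun n => xiScal P e (p (x n) a)) atTop (nhds 0) := by
  simp only [ConeComplete, coneCauchy_iff_xiScal hP he, coneConverges_iff_tendsto_xiScal hP hp he]

/-- `(X,p)` is cone-complete iff the metric space `(X, d_p)` is complete. -/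
theorem stmt_7 {E X : Type*} [AddCommGroup E] [Module ℝ E] [TopologicalSpace E]
    [IsTopologicalAddGroup E] [ContinuousSMul ℝ E] [T2Space E] [Nonempty X]
    (P : Set E) (hP : IsTVSCone P) (p : X → X → E) (hp : IsConeMetric P p)
    (e : E) (he : e ∈ interior P) :
    ConeComplete P p ↔
      ∀ x : ℕ → X,
        (∀ ε : ℝ, 0 < ε → ∃ N, ∀ n ≥ N, ∀ m ≥ N, xiScal P e (p (x n) (x m)) < ε) →
        ∃ a : X, Tendsto (fun n => xiScal P e (p (x n) a)) atTop (nhds 0) :=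
  stmt_7_general P hP p hp e he
end

section
/- Let (X,p) be a TVS-cone metric space over a metrizable locally convex space E whose topology is generated by a countable family (q_k)_{k≥1} of seminorms, and let d_S(x,y) = inf{h(u) : u ∈ P, p(x,y) ≤ u} where h(u) = Σ_{k=1}^∞ 2^{−k}·q_k(u)/(1 + q_k(u)). If a sequence (x_n) in X satisfies d_S(x_n, x) → 0, then (x_n) cone-converges to x; hence the metric topology induced by d_S is finer than the cone metric topology τ_p. -/
/-!
Each term of `h u` bounds one seminorm `q k u`, so `h u < δ` for small `δ` forces `u` into any
prescribed neighbourhood of `0` in `E`. Given `c ≫ 0`, choose `δ` so that `h u < δ` implies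
`u ≪ c`. If `d_S(x, y) < δ`, the infimum defining it is attained up to `δ` by some `u ≥ p(x, y)`
with `h u < δ`, hence `p(x, y) ≤ u ≪ c`. This gives cone convergence, and with the triangle
inequality it shows that every cone ball contains a `d_S`-ball around each of its points.
-/

open Filter Topology

noncomputable def hFun {E : Type*} [AddCommGroup E] [Module ℝ E]
    (q : ℕ → Seminorm ℝ E) (u : E) : ℝ :=
  ∑' k : ℕ, (1 / 2 : ℝ) ^ (k + 1) * (q k u / (1 + q k u))

noncomputable def dS {E X : Type*} [AddCommGroup E] [Module ℝ E] [TopologicalSpace E]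
    (q : ℕ → Seminorm ℝ E) (P : Set E) (p : X → X → E) (x y : X) : ℝ :=
  sInf {r : ℝ | ∃ u ∈ P, ConeLe P (p x y) u ∧ r = hFun q u}

lemma div_one_add_lt_div_one_add_iff {a b : ℝ} (ha : 0 ≤ a) (hb : 0 ≤ b) :
    a / (1 + a) < b / (1 + b) ↔ a < b := by
  rw [div_lt_div_iff₀ (by positivity) (by positivity)]
  constructor <;> intro h <;> nlinarith

section HFun

variable {E : Type*} [AddCommGroup E] [Module ℝ E] (q : ℕ → Seminorm ℝ E)

lemma hFun_term_nonneg (u : E) (k : ℕ) :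
    0 ≤ (1 / 2 : ℝ) ^ (k + 1) * (q k u / (1 + q k u)) := by
  have := apply_nonneg (q k) u
  positivity

lemma hFun_summable (u : E) :
    Summable fun k : ℕ => (1 / 2 : ℝ) ^ (k + 1) * (q k u / (1 + q k u)) := by
  refine .of_nonneg_of_le (hFun_term_nonneg q u) (fun k => ?_)
    ((summable_nat_add_iff 1).mpr summable_geometric_two)
  have := apply_nonneg (q k) u
  exact mul_le_of_le_one_right (by positivity) (div_le_one_of_le₀ (by linarith) (by linarith))

lemma hFun_term_le_hFun (u : E) (k : ℕ) :
    (1 / 2 : ℝ) ^ (k + 1) * (q k u / (1 + q k u)) ≤ hFun q u :=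
  (hFun_summable q u).le_tsum k fun j _ => hFun_term_nonneg q u j

lemma hFun_nonneg (u : E) : 0 ≤ hFun q u :=
  tsum_nonneg (hFun_term_nonneg q u)

lemma hFun_zero : hFun q 0 = 0 := by
  simp [hFun]

lemma WithSeminorms.exists_pos_forall_hFun_lt_mem [TopologicalSpace E] (hq : WithSeminorms q)
    {U : Set E} (hU : U ∈ 𝓝 0) : ∃ δ > 0, ∀ u, hFun q u < δ → u ∈ U := by
  obtain ⟨s, ε, hε, hball⟩ := (hq.mem_nhds_iff 0 U).mp hU
  refine ⟨(1 / 2 : ℝ) ^ (s.sup id + 1) * (ε / (1 + ε)), by positivity, fun u hu => hball ?_⟩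
  rw [Seminorm.mem_ball_zero]
  refine Seminorm.finset_sup_apply_lt hε fun k hk => ?_
  have hk_le : (1 / 2 : ℝ) ^ (s.sup id + 1) ≤ (1 / 2) ^ (k + 1) :=
    pow_le_pow_of_le_one (by norm_num) (by norm_num) (by simpa using Finset.le_sup (f := id) hk)
  have hterm : (1 / 2 : ℝ) ^ (k + 1) * (q k u / (1 + q k u))
      < (1 / 2) ^ (k + 1) * (ε / (1 + ε)) :=
    calc _ ≤ hFun q u := hFun_term_le_hFun q u k
      _ < _ := hu
      _ ≤ _ := mul_le_mul_of_nonneg_right hk_le (by positivity)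
  exact (div_one_add_lt_div_one_add_iff (apply_nonneg _ _) hε.le).mp
    (lt_of_mul_lt_mul_left hterm (by positivity))

end HFun

section Cone

variable {E : Type*} [AddCommGroup E] [Module ℝ E] [TopologicalSpace E] {P : Set E}

lemma IsTVSCone.zero_mem (hP : IsTVSCone P) : (0 : E) ∈ P := by
  obtain ⟨e, he⟩ := hP.int_nonempty
  simpa using hP.smul_mem 0 le_rfl (interior_subset he)

lemma IsTVSCone.coneLe_refl (hP : IsTVSCone P) (a : E) : ConeLe P a a := by
  simpa [ConeLe] using hP.zero_mem

open scoped Pointwise in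
lemma IsTVSCone.coneLt_of_coneLe_of_coneLt [IsTopologicalAddGroup E] (hP : IsTVSCone P)
    {a b c : E} (hab : ConeLe P a b) (hbc : ConeLt P b c) : ConeLt P a c := by
  have hsum : interior P + P ⊆ interior P :=
    subset_interior_add_left.trans
      (interior_mono (Set.add_subset_iff.mpr fun _ hx _ hy => hP.add_mem hx hy))
  simpa [ConeLt] using hsum (Set.add_mem_add hbc hab)

lemma exists_pos_forall_hFun_lt_coneLt (q : ℕ → Seminorm ℝ E) (hq : WithSeminorms q) {c : E}
    (hc : c ∈ interior P) : ∃ δ > 0, ∀ u, hFun q u < δ → ConeLt P u c := by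
  have : IsTopologicalAddGroup E := hq.topologicalAddGroup
  have hU : (c - ·) ⁻¹' interior P ∈ 𝓝 (0 : E) :=
    (continuous_const.sub continuous_id).continuousAt.preimage_mem_nhds
      (by simpa using isOpen_interior.mem_nhds hc)
  exact hq.exists_pos_forall_hFun_lt_mem q hU

end Cone

section DS

variable {E X : Type*} [AddCommGroup E] {P : Set E} {p : X → X → E}

lemma IsConeMetric.apply_mem (hp : IsConeMetric P p) (x y : X) : p x y ∈ P := by
  simpa [ConeLe] using hp.nonneg x y

variable [Module ℝ E] {q : ℕ → Seminorm ℝ E}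

lemma bddBelow_dS_set (x y : X) :
    BddBelow {r : ℝ | ∃ u ∈ P, ConeLe P (p x y) u ∧ r = hFun q u} :=
  ⟨0, by rintro _ ⟨u, -, -, rfl⟩; exact hFun_nonneg q u⟩

variable [TopologicalSpace E]

lemma dS_le_hFun {x y : X} {u : E} (hu : u ∈ P) (h : ConeLe P (p x y) u) :
    dS q P p x y ≤ hFun q u :=
  csInf_le (bddBelow_dS_set x y) ⟨u, hu, h, rfl⟩

lemma dS_self (hP : IsTVSCone P) (hp : IsConeMetric P p) (x : X) : dS q P p x x = 0 := by
  have hpxx : ConeLe P (p x x) 0 := by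
    rw [(hp.eq_zero_iff x x).mpr rfl]
    exact hP.coneLe_refl 0
  refine le_antisymm ?_ (Real.sInf_nonneg ?_)
  · simpa [hFun_zero] using dS_le_hFun (q := q) hP.zero_mem hpxx
  · rintro _ ⟨u, -, -, rfl⟩
    exact hFun_nonneg q u

lemma exists_coneLe_hFun_lt_of_dS_lt (hP : IsTVSCone P) (hp : IsConeMetric P p) {x y : X}
    {δ : ℝ} (h : dS q P p x y < δ) : ∃ u, ConeLe P (p x y) u ∧ hFun q u < δ := by
  have hne : {r : ℝ | ∃ u ∈ P, ConeLe P (p x y) u ∧ r = hFun q u}.Nonempty :=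
    ⟨_, p x y, hp.apply_mem x y, hP.coneLe_refl _, rfl⟩
  obtain ⟨_, ⟨u, -, hle, rfl⟩, hu⟩ := (csInf_lt_iff (bddBelow_dS_set x y) hne).mp h
  exact ⟨u, hle, hu⟩

lemma exists_pos_forall_dS_lt_coneLt (hq : WithSeminorms q) (hP : IsTVSCone P)
    (hp : IsConeMetric P p) {c : E} (hc : c ∈ interior P) :
    ∃ δ > 0, ∀ y z, dS q P p y z < δ → ConeLt P (p y z) c := by
  have : IsTopologicalAddGroup E := hq.topologicalAddGroup
  obtain ⟨δ, hδ, hsmall⟩ := exists_pos_forall_hFun_lt_coneLt q hq hc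
  refine ⟨δ, hδ, fun y z hyz => ?_⟩
  obtain ⟨u, hle, hu⟩ := exists_coneLe_hFun_lt_of_dS_lt hP hp hyz
  exact hP.coneLt_of_coneLe_of_coneLt hle (hsmall u hu)

lemma coneConverges_of_tendsto_dS (hq : WithSeminorms q) (hP : IsTVSCone P)
    (hp : IsConeMetric P p) {x : ℕ → X} {a : X}
    (hx : Tendsto (fun n => dS q P p (x n) a) atTop (𝓝 0)) : ConeConverges P p x a := by
  intro c hc
  obtain ⟨δ, hδ, hsmall⟩ := exists_pos_forall_dS_lt_coneLt hq hP hp hc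
  obtain ⟨N, hN⟩ := eventually_atTop.mp (hx.eventually_lt_const hδ)
  exact ⟨N, fun n hn => hsmall _ _ (hN n hn)⟩

abbrev dSTopology (q : ℕ → Seminorm ℝ E) (P : Set E) (p : X → X → E) : TopologicalSpace X :=
  TopologicalSpace.generateFrom {s | ∃ x : X, ∃ ε : ℝ, 0 < ε ∧ s = {y | dS q P p x y < ε}}

lemma isOpen_coneBall_dSTopology (hq : WithSeminorms q) (hP : IsTVSCone P)
    (hp : IsConeMetric P p) (x : X) (c : E) : IsOpen[dSTopology q P p] (coneBall P p x c) := by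
  have : IsTopologicalAddGroup E := hq.topologicalAddGroup
  let _ : TopologicalSpace X := dSTopology q P p
  refine isOpen_iff_forall_mem_open.mpr fun y (hy : c - p x y ∈ interior P) => ?_
  obtain ⟨δ, hδ, hsmall⟩ := exists_pos_forall_dS_lt_coneLt hq hP hp hy
  refine ⟨{z | dS q P p y z < δ}, fun z hz => ?_,
    TopologicalSpace.isOpen_generateFrom_of_mem ⟨y, δ, hδ, rfl⟩, by simpa [dS_self hP hp]⟩
  -- `p x z ≤ p x y + p y z ≪ p x y + (c - p x y) = c`
  have hyz : ConeLt P (p x y + p y z) c := by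
    simpa [ConeLt, sub_sub] using hsmall y z hz
  exact hP.coneLt_of_coneLe_of_coneLt (hp.triangle x z y) hyz

lemma dSTopology_le_coneTopology (hq : WithSeminorms q) (hP : IsTVSCone P)
    (hp : IsConeMetric P p) : dSTopology q P p ≤ coneTopology P p :=
  le_generateFrom <| by
    rintro _ ⟨x, c, -, rfl⟩
    exact isOpen_coneBall_dSTopology hq hP hp x c

end DS

theorem stmt_13_general {E X : Type*} [AddCommGroup E] [Module ℝ E] [TopologicalSpace E]
    (q : ℕ → Seminorm ℝ E) (hq : WithSeminorms q)
    (P : Set E) (hP : IsTVSCone P) (p : X → X → E) (hp : IsConeMetric P p) :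
    (∀ (x : ℕ → X) (a : X),
        Tendsto (fun n => dS q P p (x n) a) atTop (nhds 0) → ConeConverges P p x a) ∧
    (TopologicalSpace.generateFrom
        {s : Set X | ∃ x : X, ∃ ε : ℝ, 0 < ε ∧ s = {y | dS q P p x y < ε}}
      ≤ coneTopology P p) :=
  ⟨fun _ _ hx => coneConverges_of_tendsto_dS hq hP hp hx, dSTopology_le_coneTopology hq hP hp⟩

/-- if `d_S (x_n) x → 0` then `x_n` cone-converges to `x`; hence the metric
topology induced by `d_S` is finer than the cone metric topology `τ_p`. -/
theorem stmt_13 {E X : Type*} [AddCommGroup E] [Module ℝ E] [TopologicalSpace E]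
    [IsTopologicalAddGroup E] [ContinuousSMul ℝ E] [T2Space E] [Nonempty X]
    (q : ℕ → Seminorm ℝ E) (hq : WithSeminorms q)
    (P : Set E) (hP : IsTVSCone P) (p : X → X → E) (hp : IsConeMetric P p) :
    (∀ (x : ℕ → X) (a : X),
        Tendsto (fun n => dS q P p (x n) a) atTop (nhds 0) → ConeConverges P p x a) ∧
    (TopologicalSpace.generateFrom
        {s : Set X | ∃ x : X, ∃ ε : ℝ, 0 < ε ∧ s = {y | dS q P p x y < ε}}
      ≤ coneTopology P p) :=
  stmt_13_general q hq P hP p hp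
end

section
/- Let (X,p) be a TVS-cone metric space over E with cone P, fix e ∈ int P, and let T : X → X and φ : E → E satisfy: φ(P) ⊆ P; φ is increasing on P (if a, b ∈ P and a ≤ b then φ(a) ≤ φ(b)); φ(r·e) ≤ r·φ(e) for every real r ≥ 0; and p(Tx, Ty) ≤ φ(p(x,y)) for all x, y ∈ X. Then d_p(Tx, Ty) ≤ ξ_e(φ(e)) · d_p(x, y) for all x, y ∈ X; in particular, T satisfies d_p(Tx,Ty) ≤ ψ(d_p(x,y)) for the linear, increasing, continuous map ψ(t) = ξ_e(φ(e))·t on [0,∞). -/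
open Filter Topology

/-!
Write `d = ξ_e (p x y)` and `k = ξ_e (φ e)`. Since `P` is closed, the infimum defining `ξ_e z` is
attained, i.e. `z ≤ ξ_e z • e`; so monotonicity and subhomogeneity of `φ` give
`p (T x) (T y) ≤ φ (p x y) ≤ φ (d • e) ≤ d • φ e ≤ d • (k • e)`, and `ξ_e z ≤ t` whenever
`z ≤ t • e`. For `z ∈ P` the defining sets are bounded below by `0` as long as `-e ∉ P`; otherwise
`e = 0` is interior to `P`, so `P = E` and `ξ_e` vanishes identically.
-/

theorem IsConeMetric.mem {E X : Type*} [AddCommGroup E] {P : Set E} {p : X → X → E}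
    (hp : IsConeMetric P p) (x y : X) : p x y ∈ P := by
  simpa only [ConeLe, sub_zero] using hp.nonneg x y

section ConeOrder

variable {E : Type*} [AddCommGroup E] [Module ℝ E] [TopologicalSpace E] {P : Set E} {e z : E}

namespace IsTVSCone

theorem coneLe_trans (hP : IsTVSCone P) {a b c : E} (hab : ConeLe P a b) (hbc : ConeLe P b c) :
    ConeLe P a c := by
  simpa only [ConeLe, sub_add_sub_cancel] using hP.add_mem hbc hab

theorem coneLe_smul (hP : IsTVSCone P) {r : ℝ} (hr : 0 ≤ r) {a b : E} (hab : ConeLe P a b) :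
    ConeLe P (r • a) (r • b) := by
  simpa only [ConeLe, smul_sub] using hP.smul_mem r hr hab

theorem exists_smul_sub_mem [IsTopologicalAddGroup E] [ContinuousSMul ℝ E] (hP : IsTVSCone P)
    (he : e ∈ interior P) (z : E) : ∃ t : ℝ, t • e - z ∈ P := by
  have hcont : Continuous fun r : ℝ => e - r • z := by fun_prop
  have hnear : ∀ᶠ r in 𝓝 (0 : ℝ), e - r • z ∈ interior P :=
    (hcont.tendsto' 0 e (by simp)).eventually (isOpen_interior.mem_nhds he)
  obtain ⟨r, hr, hr0⟩ := ((hnear.filter_mono nhdsWithin_le_nhds).and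
    (self_mem_nhdsWithin (s := Set.Ioi 0))).exists
  refine ⟨r⁻¹, ?_⟩
  have := hP.smul_mem r⁻¹ (inv_nonneg.2 (le_of_lt hr0)) (interior_subset hr)
  rwa [smul_sub, inv_smul_smul₀ (ne_of_gt hr0)] at this

theorem eq_univ_of_zero_mem_interior [IsTopologicalAddGroup E] [ContinuousSMul ℝ E]
    (hP : IsTVSCone P) (h0 : (0 : E) ∈ interior P) : P = Set.univ := by
  refine Set.eq_univ_of_forall fun a => ?_
  obtain ⟨t, ht⟩ := hP.exists_smul_sub_mem h0 (-a)
  simpa using ht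

theorem nonneg_of_smul_sub_mem (hP : IsTVSCone P) (hneg : -e ∉ P) (hz : z ∈ P) {t : ℝ}
    (ht : t • e - z ∈ P) : 0 ≤ t := by
  by_contra! htneg
  have hte : t • e ∈ P := by simpa using hP.add_mem ht hz
  have := hP.smul_mem (-t)⁻¹ (inv_nonneg.2 (by linarith)) hte
  rw [smul_smul, show (-t)⁻¹ * t = -1 by field_simp [htneg.ne], neg_one_smul] at this
  exact hneg this

theorem bddBelow_setOf_smul_sub_mem (hP : IsTVSCone P) (hneg : -e ∉ P) (hz : z ∈ P) :
    BddBelow {t : ℝ | t • e - z ∈ P} :=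
  ⟨0, fun _ ht => hP.nonneg_of_smul_sub_mem hneg hz ht⟩

end IsTVSCone

theorem xiScal_le (hP : IsTVSCone P) (hneg : -e ∉ P) (hz : z ∈ P) {t : ℝ}
    (ht : ConeLe P z (t • e)) : xiScal P e z ≤ t :=
  csInf_le (hP.bddBelow_setOf_smul_sub_mem hneg hz) ht

variable [IsTopologicalAddGroup E] [ContinuousSMul ℝ E]

theorem xiScal_eq_zero_of_neg_mem (hP : IsTVSCone P) (he : e ∈ interior P) (hneg : -e ∈ P)
    (z : E) : xiScal P e z = 0 := by
  obtain rfl : e = 0 := hP.pointed e (interior_subset he) hneg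
  simp [xiScal, hP.eq_univ_of_zero_mem_interior he]

theorem coneLe_smul_xiScal (hP : IsTVSCone P) (he : e ∈ interior P) (hneg : -e ∉ P)
    (hz : z ∈ P) : ConeLe P z (xiScal P e z • e) := by
  have hclosed : IsClosed {t : ℝ | t • e - z ∈ P} :=
    hP.isClosed.preimage (by fun_prop : Continuous fun t : ℝ => t • e - z)
  exact hclosed.csInf_mem (hP.exists_smul_sub_mem he z) (hP.bddBelow_setOf_smul_sub_mem hneg hz)

theorem xiScal_nonneg (hP : IsTVSCone P) (he : e ∈ interior P) (hneg : -e ∉ P) (hz : z ∈ P) :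
    0 ≤ xiScal P e z :=
  hP.nonneg_of_smul_sub_mem hneg hz (coneLe_smul_xiScal hP he hneg hz)

end ConeOrder

theorem stmt_16_general {E X : Type*} [AddCommGroup E] [Module ℝ E] [TopologicalSpace E]
    [IsTopologicalAddGroup E] [ContinuousSMul ℝ E]
    (P : Set E) (hP : IsTVSCone P) (p : X → X → E) (hp : IsConeMetric P p)
    (e : E) (he : e ∈ interior P) (T : X → X) (φ : E → E)
    (hφP : ∀ a ∈ P, φ a ∈ P)
    (hφmono : ∀ a ∈ P, ∀ b ∈ P, ConeLe P a b → ConeLe P (φ a) (φ b))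
    (hφhom : ∀ r : ℝ, 0 ≤ r → ConeLe P (φ (r • e)) (r • φ e))
    (hT : ∀ x y : X, ConeLe P (p (T x) (T y)) (φ (p x y))) :
    ∀ x y : X, xiScal P e (p (T x) (T y)) ≤ xiScal P e (φ e) * xiScal P e (p x y) := by
  intro x y
  by_cases hneg : -e ∈ P
  · simp only [xiScal_eq_zero_of_neg_mem hP he hneg, mul_zero, le_refl]
  set d := xiScal P e (p x y)
  set k := xiScal P e (φ e)
  have hφe : φ e ∈ P := hφP e (interior_subset he)
  have hd : 0 ≤ d := xiScal_nonneg hP he hneg (hp.mem x y)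
  have hde : d • e ∈ P := hP.smul_mem d hd (interior_subset he)
  have hpd : ConeLe P (p x y) (d • e) := coneLe_smul_xiScal hP he hneg (hp.mem x y)
  have hφk : ConeLe P (φ e) (k • e) := coneLe_smul_xiScal hP he hneg hφe
  have hchain : ConeLe P (p (T x) (T y)) ((k * d) • e) := by
    refine hP.coneLe_trans (hT x y) <| hP.coneLe_trans (hφmono _ (hp.mem x y) _ hde hpd) <|
      hP.coneLe_trans (hφhom d hd) ?_
    rw [mul_comm, mul_smul]
    exact hP.coneLe_smul hd hφk
  exact xiScal_le hP hneg (hp.mem _ _) hchain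

/-- if `p (Tx) (Ty) ≤ φ (p x y)` for an increasing, positively subhomogeneous
`φ : P → P`, then `d_p (Tx) (Ty) ≤ ξ_e (φ e) · d_p x y`. -/
theorem stmt_16 {E X : Type*} [AddCommGroup E] [Module ℝ E] [TopologicalSpace E]
    [IsTopologicalAddGroup E] [ContinuousSMul ℝ E] [T2Space E] [Nonempty X]
    (P : Set E) (hP : IsTVSCone P) (p : X → X → E) (hp : IsConeMetric P p)
    (e : E) (he : e ∈ interior P) (T : X → X) (φ : E → E)
    (hφP : ∀ a ∈ P, φ a ∈ P)
    (hφmono : ∀ a ∈ P, ∀ b ∈ P, ConeLe P a b → ConeLe P (φ a) (φ b))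
    (hφhom : ∀ r : ℝ, 0 ≤ r → ConeLe P (φ (r • e)) (r • φ e))
    (hT : ∀ x y : X, ConeLe P (p (T x) (T y)) (φ (p x y))) :
    ∀ x y : X, xiScal P e (p (T x) (T y)) ≤ xiScal P e (φ e) * xiScal P e (p x y) :=
  stmt_16_general P hP p hp e he T φ hφP hφmono hφhom hT
end
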